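/- Let n ≥ 1 and let k = [[a,b,0],[c,d,0],[0,0,e]] ∈ GL₃(ℚ_p) with a, e ∈ ℤ_p^×, b, c ∈ p^nℤ_p, and d ∈ 1 + p^nℤ_p. Let u₀ = [[1,0,0],[0,0,−1],[0,1,0]] and set C = P̄₂(ℚ_p)·{[[1,0,x],[0,1,y],[0,0,1]] : x ∈ p^nℤ_p, y ∈ ℤ_p}. Then C·(u₀⁻¹ k u₀) = C; in particular, right multiplication by u₀⁻¹ k u₀ preserves the set C. -/

import Mathlib

open Matrix

noncomputable section

/-- The ring of `3 × 3` matrices over `ℚ_p`. -/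
abbrev M3 (p : ℕ) [Fact p.Prime] := Matrix (Fin 3) (Fin 3) ℚ_[p]

/-- `P̄₂(ℚ_p) = {g ∈ GL₃(ℚ_p) : g₁₃ = g₂₃ = 0}`. -/
def P2bar (p : ℕ) [Fact p.Prime] : Set (M3 p) :=
  {g | IsUnit g.det ∧ g 0 2 = 0 ∧ g 1 2 = 0}

/-- The matrix `u₀ = [[1,0,0],[0,0,−1],[0,1,0]]`. -/
def u0 (p : ℕ) [Fact p.Prime] : M3 p := !![1, 0, 0; 0, 0, -1; 0, 1, 0]

/-- The set `C = P̄₂(ℚ_p)·{[[1,0,x],[0,1,y],[0,0,1]] : x ∈ p^nℤ_p, y ∈ ℤ_p}`. -/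
def Cset (p : ℕ) [Fact p.Prime] (n : ℕ) : Set (M3 p) :=
  {g | ∃ q ∈ P2bar p, ∃ x y : ℚ_[p], ‖x‖ ≤ (p : ℝ) ^ (-(n : ℤ)) ∧ ‖y‖ ≤ 1 ∧
    g = q * !![1, 0, x; 0, 1, y; 0, 0, 1]}

namespace St5Aux

variable {p : ℕ} [Fact p.Prime]

lemma eps_lt_one {n : ℕ} (hn : 1 ≤ n) : (p : ℝ) ^ (-(n : ℤ)) < 1 := by
  have hp : (1:ℝ) < p := by exact_mod_cast (Fact.out : p.Prime).one_lt
  calc (p : ℝ) ^ (-(n:ℤ)) < (p:ℝ) ^ (0:ℤ) := by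
        apply zpow_lt_zpow_right₀ hp; omega
    _ = 1 := by norm_num

lemma eps_pos {n : ℕ} : (0:ℝ) < (p : ℝ) ^ (-(n : ℤ)) := by
  have hp : (0:ℝ) < p := by exact_mod_cast (Fact.out : p.Prime).pos
  positivity

/-- ultrametric: unit plus small has norm one -/
lemma norm_add_small {x y : ℚ_[p]} (hx : ‖x‖ = 1) (hy : ‖y‖ < 1) : ‖x + y‖ = 1 := by
  rw [Padic.add_eq_max_of_ne (by rw [hx]; exact (ne_of_lt hy).symm)]
  rw [hx, max_eq_left hy.le]

lemma norm_sub_le_max (x y : ℚ_[p]) : ‖x - y‖ ≤ max ‖x‖ ‖y‖ := by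
  rw [sub_eq_add_neg]
  simpa using Padic.nonarchimedean x (-y)

/-- Key step: right multiplication by `!![a,0,-b;0,e,0;-c,0,d]` preserves `Cset`. -/
lemma step {n : ℕ} (hn : 1 ≤ n)
    (a b c d e : ℚ_[p]) (ha : ‖a‖ = 1) (he : ‖e‖ = 1)
    (hb : ‖b‖ ≤ (p:ℝ)^(-(n:ℤ))) (hc : ‖c‖ ≤ (p:ℝ)^(-(n:ℤ)))
    (hd : ‖d - 1‖ ≤ (p:ℝ)^(-(n:ℤ)))
    {g : M3 p} (hg : g ∈ Cset p n) :
    g * !![a, 0, -b; 0, e, 0; -c, 0, d] ∈ Cset p n := by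
  obtain ⟨q, ⟨hqdet, hq02, hq12⟩, x, y, hx, hy, rfl⟩ := hg
  set ε := (p:ℝ)^(-(n:ℤ)) with hεdef
  have hε1 : ε < 1 := eps_lt_one hn
  have hε0 : 0 < ε := eps_pos
  have hd1 : ‖d‖ = 1 := by
    have : d = 1 + (d - 1) := by ring
    rw [this, norm_add_small (by simp) (lt_of_le_of_lt hd hε1)]
  have he0 : e ≠ 0 := by intro h; rw [h] at he; simp at he
  have hxc : ‖x * c‖ < 1 := by
    rw [norm_mul]
    calc ‖x‖ * ‖c‖ ≤ ε * ε := mul_le_mul hx hc (norm_nonneg _) hε0.le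
      _ < 1 := by nlinarith
  have hu : ‖a - x * c‖ = 1 := by
    rw [sub_eq_add_neg]
    exact norm_add_small ha (by simpa using hxc)
  have hu0 : a - x * c ≠ 0 := by intro h; rw [h] at hu; simp at hu
  set x' := (x * d - b) / (a - x * c) with hx'def
  set y' := (y * d + x' * (y * c)) / e with hy'def
  have hx' : ‖x'‖ ≤ ε := by
    rw [hx'def, norm_div, hu, div_one]
    calc ‖x * d - b‖ ≤ max ‖x * d‖ ‖b‖ := norm_sub_le_max _ _
      _ ≤ ε := by
          apply max_le _ hb
          rw [norm_mul, hd1, mul_one]; exact hx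
  have hy'1 : ‖y'‖ ≤ 1 := by
    rw [hy'def, norm_div, he, div_one]
    calc ‖y * d + x' * (y * c)‖ ≤ max ‖y * d‖ ‖x' * (y * c)‖ :=
          Padic.nonarchimedean _ _
      _ ≤ 1 := by
          apply max_le
          · rw [norm_mul, hd1, mul_one]; exact hy
          · rw [norm_mul, norm_mul]
            have h1 : ‖x'‖ ≤ 1 := hx'.trans hε1.le
            have h2 : ‖c‖ ≤ 1 := hc.trans hε1.le
            have h3 : ‖y‖ * ‖c‖ ≤ 1 := by
              nlinarith [norm_nonneg y, norm_nonneg c]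
            nlinarith [norm_nonneg x', mul_nonneg (norm_nonneg y) (norm_nonneg c)]
  have hdxc : ‖d + x' * c‖ = 1 := by
    apply norm_add_small hd1
    rw [norm_mul]
    calc ‖x'‖ * ‖c‖ ≤ ε * ε := mul_le_mul hx' hc (norm_nonneg _) hε0.le
      _ < 1 := by nlinarith
  have hdxc0 : d + x' * c ≠ 0 := by intro h; rw [h] at hdxc; simp at hdxc
  set B : M3 p := !![a - x * c, 0, 0; -(y*c), e, 0; -c, 0, d + x'*c] with hB
  have h1 : (a - x * c) * x' = x * d - b := by rw [hx'def]; field_simp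
  have h2 : e * y' = y * d + x' * (y * c) := by rw [hy'def]; field_simp
  have key : !![(1:ℚ_[p]), 0, x; 0, 1, y; 0, 0, 1] * !![a, 0, -b; 0, e, 0; -c, 0, d]
      = B * !![1, 0, x'; 0, 1, y'; 0, 0, 1] := by
    rw [hB, Matrix.mul_fin_three, Matrix.mul_fin_three]
    ext i j
    fin_cases i <;> fin_cases j <;>
      simp [-mul_eq_zero] <;>
      first
        | ring1
        | linear_combination h1
        | linear_combination h2
        | linear_combination -h1
        | linear_combination -h2
  refine ⟨q * B, ⟨?_, ?_, ?_⟩, x', y', hx', hy'1, ?_⟩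
  · rw [Matrix.det_mul]
    apply hqdet.mul
    have hdet : B.det = (a - x * c) * (e * (d + x' * c)) := by
      rw [hB]; rw [Matrix.det_fin_three]; simp; ring
    rw [hdet, isUnit_iff_ne_zero]
    exact mul_ne_zero hu0 (mul_ne_zero he0 hdxc0)
  · simp [Matrix.mul_apply, Fin.sum_univ_three, hB, hq02]
  · simp [Matrix.mul_apply, Fin.sum_univ_three, hB, hq12]
  · rw [mul_assoc, key, ← mul_assoc]

end St5Aux

open St5Aux in
/-- For `k = [[a,b,0],[c,d,0],[0,0,e]]` with `a, e ∈ ℤ_p^×`, `b, c ∈ p^nℤ_p` and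
`d ∈ 1 + p^nℤ_p`, right multiplication by `u₀⁻¹ k u₀` preserves the set `C`. -/
theorem statement5 (p : ℕ) [Fact p.Prime] (n : ℕ) (hn : 1 ≤ n)
    (a b c d e : ℚ_[p])
    (ha : ‖a‖ = 1) (he : ‖e‖ = 1)
    (hb : ‖b‖ ≤ (p : ℝ) ^ (-(n : ℤ))) (hc : ‖c‖ ≤ (p : ℝ) ^ (-(n : ℤ)))
    (hd : ‖d - 1‖ ≤ (p : ℝ) ^ (-(n : ℤ))) :
    (fun g : M3 p => g * ((u0 p)⁻¹ * !![a, b, 0; c, d, 0; 0, 0, e] * u0 p)) ''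
      Cset p n = Cset p n := by
  set ε := (p:ℝ)^(-(n:ℤ)) with hεdef
  have hε1 : ε < 1 := eps_lt_one hn
  have hε0 : 0 < ε := eps_pos
  have hd1 : ‖d‖ = 1 := by
    have : d = 1 + (d - 1) := by ring
    rw [this, norm_add_small (by simp) (lt_of_le_of_lt hd hε1)]
  have he0 : e ≠ 0 := by intro h; rw [h] at he; simp at he
  have hbc : ‖b * c‖ < 1 := by
    rw [norm_mul]
    calc ‖b‖ * ‖c‖ ≤ ε * ε := mul_le_mul hb hc (norm_nonneg _) hε0.le
      _ < 1 := by nlinarith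
  have hΔ : ‖a * d - b * c‖ = 1 := by
    rw [sub_eq_add_neg]
    apply norm_add_small (by rw [norm_mul, ha, hd1, mul_one])
    simpa using hbc
  have hΔ0 : a * d - b * c ≠ 0 := by intro h; rw [h] at hΔ; simp at hΔ
  have huinv : (u0 p)⁻¹ = !![1, 0, 0; 0, 0, 1; 0, -1, 0] := by
    apply Matrix.inv_eq_right_inv
    rw [u0, Matrix.mul_fin_three,
      show (1 : M3 p) = !![1,0,0;0,1,0;0,0,1] from Matrix.one_fin_three]
    norm_num
  have transform : (u0 p)⁻¹ * !![a, b, 0; c, d, 0; 0, 0, e] * u0 p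
      = !![a, 0, -b; 0, e, 0; -c, 0, d] := by
    rw [huinv, u0, Matrix.mul_fin_three, Matrix.mul_fin_three]
    norm_num
  -- entries of `k⁻¹`
  have ha' : ‖d / (a * d - b * c)‖ = 1 := by rw [norm_div, hd1, hΔ]; norm_num
  have he' : ‖e⁻¹‖ = 1 := by rw [norm_inv, he]; norm_num
  have hb' : ‖-b / (a * d - b * c)‖ ≤ ε := by
    rw [norm_div, hΔ, div_one, norm_neg]; exact hb
  have hc' : ‖-c / (a * d - b * c)‖ ≤ ε := by
    rw [norm_div, hΔ, div_one, norm_neg]; exact hc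
  have hd' : ‖a / (a * d - b * c) - 1‖ ≤ ε := by
    have h1 : a / (a * d - b * c) - 1 = (a * (1 - d) + b * c) / (a * d - b * c) := by
      field_simp
      ring
    rw [h1, norm_div, hΔ, div_one]
    calc ‖a * (1 - d) + b * c‖ ≤ max ‖a * (1 - d)‖ ‖b * c‖ :=
          Padic.nonarchimedean _ _
      _ ≤ ε := by
          apply max_le
          · rw [norm_mul, ha, one_mul, ← norm_neg]
            simpa using hd
          · rw [norm_mul]
            calc ‖b‖ * ‖c‖ ≤ ε * ε := mul_le_mul hb hc (norm_nonneg _) hε0.le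
              _ ≤ ε := by nlinarith
  have hM'M : !![d / (a * d - b * c), 0, -(-b / (a * d - b * c));
        0, e⁻¹, 0;
        -(-c / (a * d - b * c)), 0, a / (a * d - b * c)] *
      !![a, 0, -b; 0, e, 0; -c, 0, d] = (1 : M3 p) := by
    rw [Matrix.mul_fin_three]
    have h00 : d / (a * d - b * c) * a + 0 * 0 + -(-b / (a * d - b * c)) * -c = 1 := by
      rw [eq_comm, ← div_self hΔ0]; ring
    have h01 : d / (a * d - b * c) * 0 + 0 * e + -(-b / (a * d - b * c)) * 0 = 0 := by
      ring
    have h02 : d / (a * d - b * c) * -b + 0 * 0 + -(-b / (a * d - b * c)) * d = 0 := by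
      ring
    have h10 : 0 * a + e⁻¹ * 0 + 0 * -c = 0 := by ring
    have h11 : 0 * 0 + e⁻¹ * e + 0 * 0 = 1 := by simp [he0]
    have h12 : 0 * -b + e⁻¹ * 0 + 0 * d = 0 := by ring
    have h20 : -(-c / (a * d - b * c)) * a + 0 * 0 + a / (a * d - b * c) * -c = 0 := by
      ring
    have h21 : -(-c / (a * d - b * c)) * 0 + 0 * e + a / (a * d - b * c) * 0 = 0 := by
      ring
    have h22 : -(-c / (a * d - b * c)) * -b + 0 * 0 + a / (a * d - b * c) * d = 1 := by
      rw [eq_comm, ← div_self hΔ0]; ring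
    rw [h00, h01, h02, h10, h11, h12, h20, h21, h22]
    exact Matrix.one_fin_three.symm
  apply Set.Subset.antisymm
  · rintro _ ⟨g, hg, rfl⟩
    dsimp only
    rw [transform]
    exact step hn a b c d e ha he hb hc hd hg
  · intro h hh
    refine ⟨h * !![d / (a * d - b * c), 0, -(-b / (a * d - b * c));
        0, e⁻¹, 0;
        -(-c / (a * d - b * c)), 0, a / (a * d - b * c)],
      step hn _ _ _ _ _ ha' he' hb' hc' hd' hh, ?_⟩
    dsimp only
    rw [transform, mul_assoc, hM'M, mul_one]
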